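/- For every natural number n ≥ 1, the volume C_n of the unit ball in n-dimensional Euclidean space satisfies C_n = 2^n · ∫₀^1 f^{*n}(z) dz. -/

import Mathlib

open MeasureTheory Real

/-- The density of `X²` for `X` uniform on `[-1,1]`:
`f z = (1/2) z^(-1/2)` for `0 < z < 1`, and `0` otherwise. -/
noncomputable def f (z : ℝ) : ℝ :=
  if 0 < z ∧ z < 1 then (1 / 2) * z ^ (-(1 / 2) : ℝ) else 0

/-- Convolution of real functions: `(g ⋆ h)(z) = ∫ g λ · h (z − λ) dλ`. -/
noncomputable def conv (g h : ℝ → ℝ) (z : ℝ) : ℝ :=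
  ∫ l, g l * h (z - l)

/-- `nconv n` is the `n`-fold convolution `f^{*n}` (for `n ≥ 1`):
`f^{*1} = f` and `f^{*(n+1)} = f^{*n} ⋆ f`. -/
noncomputable def nconv : ℕ → ℝ → ℝ
  | 0 => fun _ => 0
  | 1 => f
  | (n + 2) => conv (nconv (n + 1)) f

lemma real_beta_scaled (p q : ℝ) (hp : 0 < p) (hq : 0 < q) {z : ℝ} (hz : 0 < z) :
    ∫ x in (0:ℝ)..z, x ^ (p - 1) * (z - x) ^ (q - 1) =
      z ^ (p + q - 1) * (Real.Gamma p * Real.Gamma q / Real.Gamma (p + q)) := by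
  have hB := Complex.Gamma_mul_Gamma_eq_betaIntegral (s := (p:ℂ)) (t := (q:ℂ))
    (by simpa using hp) (by simpa using hq)
  have hΓ : Complex.Gamma ((p:ℂ) + q) ≠ 0 := by
    rw [← Complex.ofReal_add, Complex.Gamma_ofReal]
    exact_mod_cast (Real.Gamma_pos_of_pos (by positivity)).ne'
  have hBval : Complex.betaIntegral p q =
      ((Real.Gamma p * Real.Gamma q / Real.Gamma (p + q) : ℝ) : ℂ) := by
    rw [eq_comm, Complex.ofReal_div, Complex.ofReal_mul, ← Complex.Gamma_ofReal,
      ← Complex.Gamma_ofReal, ← Complex.Gamma_ofReal, Complex.ofReal_add, hB,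
      mul_comm, mul_div_assoc, div_self hΓ, mul_one]
  have hS := Complex.betaIntegral_scaled (p:ℂ) (q:ℂ) hz
  have hcongr : ∀ x ∈ Set.uIcc (0:ℝ) z,
      ((x ^ (p - 1) * (z - x) ^ (q - 1) : ℝ) : ℂ) =
        (x : ℂ) ^ ((p:ℂ) - 1) * ((z : ℂ) - x) ^ ((q:ℂ) - 1) := by
    intro x hx
    rw [Set.uIcc_of_le hz.le] at hx
    rw [Complex.ofReal_mul, Complex.ofReal_cpow hx.1, Complex.ofReal_cpow (by linarith [hx.2])]
    push_cast
    ring_nf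
  have hexp : ((p:ℂ) + q - 1) = ((p + q - 1 : ℝ) : ℂ) := by push_cast; ring
  rw [← intervalIntegral.integral_congr hcongr, intervalIntegral.integral_ofReal, hBval, hexp,
    ← Complex.ofReal_cpow hz.le, ← Complex.ofReal_mul] at hS
  exact_mod_cast hS

lemma nconv_nonpos : ∀ (n : ℕ) {z : ℝ}, z ≤ 0 → nconv n z = 0
  | 0, _, _ => rfl
  | 1, z, hz => by
    show f z = 0
    rw [f, if_neg (fun h => absurd h.1 (not_lt.mpr hz))]
  | (n + 2), z, hz => by
    have h : ∀ l : ℝ, nconv (n + 1) l * f (z - l) = 0 := by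
      intro l
      rcases le_or_gt l 0 with hl | hl
      · rw [nconv_nonpos (n + 1) hl, zero_mul]
      · have : ¬ (0 < z - l ∧ z - l < 1) := fun ⟨h1, _⟩ => by linarith
        rw [f, if_neg this, mul_zero]
    simp only [nconv, conv, h, integral_zero]

lemma nconv_eq : ∀ (n : ℕ), 1 ≤ n → ∀ {z : ℝ}, 0 < z → z < 1 →
    nconv n z = (Real.sqrt π / 2) ^ n / Real.Gamma (n / 2) * z ^ ((n : ℝ) / 2 - 1)
  | 0, hn, _, _, _ => absurd hn (by norm_num)
  | 1, _, z, hz, hz1 => by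
    have hπ : Real.sqrt π ≠ 0 := (Real.sqrt_pos.mpr Real.pi_pos).ne'
    rw [nconv, f, if_pos ⟨hz, hz1⟩]
    push_cast
    rw [show ((1:ℝ)/2 - 1) = -(1/2) by norm_num, Real.Gamma_one_half_eq]
    field_simp
  | (n + 2), _, z, hz, hz1 => by
    have hm : (1:ℕ) ≤ n + 1 := Nat.le_add_left 1 n
    have hp0 : (0:ℝ) < ((n:ℝ) + 1) / 2 := by positivity
    have hΓ : Real.Gamma (((n:ℝ) + 1) / 2) ≠ 0 := (Real.Gamma_pos_of_pos hp0).ne'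
    set c : ℝ := (Real.sqrt π / 2) ^ (n + 1) / Real.Gamma (((n:ℝ) + 1) / 2) * (1 / 2) with hc
    have key : (fun l => nconv (n + 1) l * f (z - l)) =
        Set.indicator (Set.Ioo (0:ℝ) z)
          (fun l => c * (l ^ (((n:ℝ) + 1) / 2 - 1) * (z - l) ^ ((1:ℝ) / 2 - 1))) := by
      funext l
      by_cases hl : l ∈ Set.Ioo (0:ℝ) z
      · rw [Set.indicator_of_mem hl]
        obtain ⟨hl0, hlz⟩ := hl
        rw [nconv_eq (n + 1) hm hl0 (hlz.trans hz1), f,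
          if_pos ⟨by linarith, by linarith⟩]
        push_cast
        rw [show ((1:ℝ)/2 - 1) = -(1/2) by norm_num]
        ring
      · rw [Set.indicator_of_notMem hl]
        rw [Set.mem_Ioo, not_and_or] at hl
        rcases hl with hl | hl
        · rw [nconv_nonpos (n + 1) (not_lt.mp hl), zero_mul]
        · have : ¬ (0 < z - l ∧ z - l < 1) := fun ⟨h1, _⟩ => by
            have := not_lt.mp hl; linarith
          rw [f, if_neg this, mul_zero]
    show conv (nconv (n + 1)) f z = _
    rw [conv, key, integral_indicator measurableSet_Ioo, ← integral_Ioc_eq_integral_Ioo,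
      ← intervalIntegral.integral_of_le hz.le, intervalIntegral.integral_const_mul,
      real_beta_scaled (((n:ℝ) + 1) / 2) (1 / 2) hp0 one_half_pos hz,
      Real.Gamma_one_half_eq]
    rw [show ((n:ℝ) + 1) / 2 + 1 / 2 = ((n:ℝ) + 2) / 2 by ring]
    push_cast
    rw [hc]
    field_simp
    ring

/-- For `n ≥ 1`, the volume `C_n` of the unit ball in `n`-dimensional Euclidean
space satisfies `C_n = 2^n · ∫₀^1 f^{*n}(z) dz`. -/
theorem unit_ball_volume_eq_integral_nconv (n : ℕ) (hn : 1 ≤ n) :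
    (volume (Metric.closedBall (0 : EuclideanSpace ℝ (Fin n)) 1)).toReal =
      2 ^ n * ∫ z in (0 : ℝ)..1, nconv n z := by
  have hn' : (0:ℝ) < n := by exact_mod_cast hn
  have hΓpos : 0 < Real.Gamma ((n:ℝ) / 2) := Real.Gamma_pos_of_pos (by positivity)
  have hΓpos' : 0 < Real.Gamma ((n:ℝ) / 2 + 1) := Real.Gamma_pos_of_pos (by positivity)
  have hint : ∫ z in (0:ℝ)..1, nconv n z =
      (Real.sqrt π / 2) ^ n / Real.Gamma ((n:ℝ) / 2) * (2 / n) := by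
    rw [intervalIntegral.integral_of_le zero_le_one, integral_Ioc_eq_integral_Ioo,
      setIntegral_congr_fun measurableSet_Ioo
        (fun z hz => nconv_eq n hn hz.1 hz.2),
      ← integral_Ioc_eq_integral_Ioo, ← intervalIntegral.integral_of_le zero_le_one,
      intervalIntegral.integral_const_mul,
      integral_rpow (Or.inl (by linarith [div_pos hn' (by norm_num : (0:ℝ) < 2)])),
      show (n:ℝ)/2 - 1 + 1 = (n:ℝ)/2 by ring, Real.one_rpow,
      Real.zero_rpow (by positivity)]
    rw [show ((1:ℝ) - 0) / ((n:ℝ)/2) = 2 / n by field_simp; norm_num]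
  haveI : Nonempty (Fin n) := ⟨⟨0, hn⟩⟩
  rw [hint, EuclideanSpace.volume_closedBall]
  simp only [Fintype.card_fin, ENNReal.ofReal_one, one_pow, one_mul]
  rw [ENNReal.toReal_ofReal (by positivity), Real.Gamma_add_one (by positivity)]
  field_simp
  rw [← mul_pow]
  congr 1
  ring
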